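/- For every a > 0 and A > 0, let B > 0 be defined by ln(B/A) = a(e^{a}−1)/(2(e^{a}+1)). Then the inter-site (two-site) peakon u_n = B exp(−a|n − 1/2|) is an exact time-independent solution of the discrete Klein–Gordon lattice equation: for every n ∈ ℤ, ∑_{m∈ℤ} exp(−a|n−m|) u_m − ((e^{2a}+1)/(e^{2a}−1) − (1/(2a)) ln(u_n²/A²)) u_n = 0. -/

import Mathlib

open Real

/-- Geometric sum over nonpositive integers. -/
lemma peakon_aux_neg (a C : ℝ) (ha : 0 < a) :
    HasSum (fun m : ℤ => if m ≤ 0 then Real.exp (C + 2 * a * (m : ℝ)) else 0)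
      (Real.exp C * (1 - Real.exp (-(2 * a)))⁻¹) := by
  have hinj : Function.Injective (fun k : ℕ => -(k : ℤ)) := by
    intro x y h; simpa using h
  rw [← hinj.hasSum_iff]
  · have hgeom := (hasSum_geometric_of_lt_one (Real.exp_nonneg (-(2 * a)))
      (Real.exp_lt_one_iff.mpr (by linarith))).mul_left (Real.exp C)
    refine hgeom.congr_fun fun k => ?_
    show (if -(k : ℤ) ≤ 0 then Real.exp (C + 2 * a * ((-(k : ℤ) : ℤ) : ℝ)) else 0)
        = Real.exp C * Real.exp (-(2 * a)) ^ k
    rw [if_pos (by omega : -(k : ℤ) ≤ 0), ← Real.exp_nat_mul, ← Real.exp_add]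
    congr 1
    push_cast
    ring
  · intro m hm
    rw [if_neg]
    intro hm0
    refine hm ⟨(-m).toNat, ?_⟩
    show -(((-m).toNat : ℤ)) = m
    omega

/-- Geometric sum over integers `≥ M`. -/
lemma peakon_aux_pos (a C : ℝ) (ha : 0 < a) (M : ℤ) :
    HasSum (fun m : ℤ => if M ≤ m then Real.exp (C - 2 * a * (m : ℝ)) else 0)
      (Real.exp (C - 2 * a * (M : ℝ)) * (1 - Real.exp (-(2 * a)))⁻¹) := by
  have hinj : Function.Injective (fun k : ℕ => M + (k : ℤ)) := by
    intro x y h; simpa using h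
  rw [← hinj.hasSum_iff]
  · have hgeom := (hasSum_geometric_of_lt_one (Real.exp_nonneg (-(2 * a)))
      (Real.exp_lt_one_iff.mpr (by linarith))).mul_left (Real.exp (C - 2 * a * (M : ℝ)))
    refine hgeom.congr_fun fun k => ?_
    show (if M ≤ M + (k : ℤ) then Real.exp (C - 2 * a * ((M + (k : ℤ) : ℤ) : ℝ)) else 0)
        = Real.exp (C - 2 * a * (M : ℝ)) * Real.exp (-(2 * a)) ^ k
    rw [if_pos (by omega : M ≤ M + (k : ℤ)), ← Real.exp_nat_mul, ← Real.exp_add]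
    congr 1
    push_cast
    ring
  · intro m hm
    rw [if_neg]
    intro hm0
    refine hm ⟨(m - M).toNat, ?_⟩
    show M + (((m - M).toNat : ℤ)) = m
    omega

lemma peakon_alg (E P c : ℝ) (hE : 1 < E) :
    P / E * (1 - 1 / (E * E))⁻¹ + c * P + P / (E * E) * (1 - 1 / (E * E))⁻¹
      = P * (c + 1 / (E - 1)) := by
  have hE0 : (0 : ℝ) < E := lt_trans one_pos hE
  have hEE : E * E - 1 ≠ 0 := by nlinarith
  have hE1' : E - 1 ≠ 0 := by linarith
  have hEne : E ≠ 0 := ne_of_gt hE0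
  have hinv : (1 - 1 / (E * E))⁻¹ = E * E / (E * E - 1) := by
    rw [show 1 - 1 / (E * E) = (E * E - 1) / (E * E) by field_simp, inv_div]
  rw [hinv]
  have hEE2 : E ^ 2 - 1 ≠ 0 := by nlinarith
  field_simp
  ring

lemma peakon_key (a : ℝ) (ha : 0 < a) (N : ℤ) (hN : 1 ≤ N) :
    HasSum (fun m : ℤ => Real.exp (-a * |(N : ℝ) - (m : ℝ)|) * Real.exp (-a * |(m : ℝ) - 1 / 2|))
      (Real.exp (-a * ((N : ℝ) - 1 / 2)) * ((N : ℝ) + 1 / (Real.exp a - 1))) := by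
  have hE1 : 1 < Real.exp a := by
    rw [← Real.exp_zero]; exact Real.exp_lt_exp.mpr ha
  have h1 : HasSum (fun m : ℤ => if m ≤ 0 then
        Real.exp (-a * ((N : ℝ) + 1 / 2) + 2 * a * (m : ℝ)) else 0)
      (Real.exp (-a * ((N : ℝ) + 1 / 2)) * (1 - Real.exp (-(2 * a)))⁻¹) :=
    peakon_aux_neg a _ ha
  have h3 : HasSum (fun m : ℤ => if N + 1 ≤ m then
        Real.exp (a * ((N : ℝ) + 1 / 2) - 2 * a * (m : ℝ)) else 0)
      (Real.exp (a * ((N : ℝ) + 1 / 2) - 2 * a * (((N + 1 : ℤ)) : ℝ))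
        * (1 - Real.exp (-(2 * a)))⁻¹) :=
    peakon_aux_pos a _ ha (N + 1)
  have h2 : HasSum (fun m : ℤ => if m ∈ Finset.Icc (1 : ℤ) N then
        Real.exp (-a * ((N : ℝ) - 1 / 2)) else 0)
      ((N : ℝ) * Real.exp (-a * ((N : ℝ) - 1 / 2))) := by
    have := hasSum_sum_of_ne_finset_zero (L := SummationFilter.unconditional ℤ) (s := Finset.Icc (1 : ℤ) N)
      (f := fun m : ℤ => if m ∈ Finset.Icc (1 : ℤ) N then
        Real.exp (-a * ((N : ℝ) - 1 / 2)) else 0)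
      (fun m hm => by simp only [if_neg hm])
    convert this using 1
    rw [Finset.sum_ite_mem, Finset.inter_self, Finset.sum_const, Int.card_Icc]
    have h' : (((N + 1 - 1).toNat : ℤ) : ℝ) = (N : ℝ) := by
      have : ((N + 1 - 1).toNat : ℤ) = N := by omega
      exact_mod_cast congrArg (Int.cast : ℤ → ℝ) this
    push_cast at h' ⊢
    rw [nsmul_eq_mul, h']
  have htot := (h1.add h2).add h3
  -- pointwise decomposition
  have hpt : ∀ m : ℤ,
      (if m ≤ 0 then Real.exp (-a * ((N : ℝ) + 1 / 2) + 2 * a * (m : ℝ)) else 0)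
        + (if m ∈ Finset.Icc (1 : ℤ) N then Real.exp (-a * ((N : ℝ) - 1 / 2)) else 0)
        + (if N + 1 ≤ m then Real.exp (a * ((N : ℝ) + 1 / 2) - 2 * a * (m : ℝ)) else 0)
      = Real.exp (-a * |(N : ℝ) - (m : ℝ)|) * Real.exp (-a * |(m : ℝ) - 1 / 2|) := by
    intro m
    have hNR : (1 : ℝ) ≤ (N : ℝ) := by exact_mod_cast hN
    rcases le_or_gt m 0 with hm | hm
    · have hmR : (m : ℝ) ≤ 0 := by exact_mod_cast hm
      have hmN : (m : ℝ) ≤ (N : ℝ) := by exact_mod_cast (show m ≤ N by omega)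
      rw [if_pos hm, if_neg (by simp only [Finset.mem_Icc]; omega),
        if_neg (by omega : ¬ N + 1 ≤ m), add_zero, add_zero,
        abs_of_nonneg (by linarith), abs_of_nonpos (by linarith), ← Real.exp_add]
      congr 1; ring
    · rcases le_or_gt m N with hmN | hmN
      · have hmR : (1 : ℝ) ≤ (m : ℝ) := by exact_mod_cast hm
        have hmNR : (m : ℝ) ≤ (N : ℝ) := by exact_mod_cast hmN
        rw [if_neg (by omega : ¬ m ≤ 0), if_pos (by simp only [Finset.mem_Icc]; omega),
          if_neg (by omega : ¬ N + 1 ≤ m), zero_add, add_zero,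
          abs_of_nonneg (by linarith), abs_of_nonneg (by linarith), ← Real.exp_add]
        congr 1; ring
      · have hmR : (N : ℝ) < (m : ℝ) := by exact_mod_cast hmN
        rw [if_neg (by omega : ¬ m ≤ 0), if_neg (by simp only [Finset.mem_Icc]; omega),
          if_pos (by omega : N + 1 ≤ m), zero_add, zero_add,
          abs_of_nonpos (by linarith), abs_of_nonneg (by linarith), ← Real.exp_add]
        congr 1; ring
  have hval : Real.exp (-a * ((N : ℝ) + 1 / 2)) * (1 - Real.exp (-(2 * a)))⁻¹
        + (N : ℝ) * Real.exp (-a * ((N : ℝ) - 1 / 2))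
        + Real.exp (a * ((N : ℝ) + 1 / 2) - 2 * a * (((N + 1 : ℤ)) : ℝ))
            * (1 - Real.exp (-(2 * a)))⁻¹
      = Real.exp (-a * ((N : ℝ) - 1 / 2)) * ((N : ℝ) + 1 / (Real.exp a - 1)) := by
    have hc : ((N + 1 : ℤ) : ℝ) = (N : ℝ) + 1 := by push_cast; ring
    rw [hc]
    have e1 : Real.exp (-a * ((N : ℝ) + 1 / 2))
        = Real.exp (-a * ((N : ℝ) - 1 / 2)) / Real.exp a := by
      rw [eq_div_iff (ne_of_gt (Real.exp_pos a)), ← Real.exp_add]; congr 1; ring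
    have e3 : Real.exp (a * ((N : ℝ) + 1 / 2) - 2 * a * ((N : ℝ) + 1))
        = Real.exp (-a * ((N : ℝ) - 1 / 2)) / (Real.exp a * Real.exp a) := by
      rw [eq_div_iff (by positivity), ← Real.exp_add, ← Real.exp_add]; congr 1; ring
    have er : Real.exp (-(2 * a)) = 1 / (Real.exp a * Real.exp a) := by
      rw [eq_div_iff (by positivity), ← Real.exp_add, ← Real.exp_add]
      rw [show -(2 * a) + (a + a) = 0 by ring, Real.exp_zero]
    rw [e1, e3, er]
    exact peakon_alg (Real.exp a) _ _ hE1
  rw [← hval]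
  exact htot.congr_fun fun m => (hpt m).symm

lemma peakon_key2 (a : ℝ) (ha : 0 < a) (n : ℤ) :
    HasSum (fun m : ℤ => Real.exp (-a * |(n : ℝ) - (m : ℝ)|) * Real.exp (-a * |(m : ℝ) - 1 / 2|))
      (Real.exp (-a * |(n : ℝ) - 1 / 2|)
        * (|(n : ℝ) - 1 / 2| + 1 / 2 + 1 / (Real.exp a - 1))) := by
  rcases le_or_gt 1 n with hn | hn
  · have hnR : (1 : ℝ) ≤ (n : ℝ) := by exact_mod_cast hn
    have habs : |(n : ℝ) - 1 / 2| = (n : ℝ) - 1 / 2 := abs_of_nonneg (by linarith)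
    rw [habs, show ((n : ℝ) - 1 / 2) + 1 / 2 + 1 / (Real.exp a - 1)
        = (n : ℝ) + 1 / (Real.exp a - 1) by ring]
    exact peakon_key a ha n hn
  · have hn0 : n ≤ 0 := by omega
    have hnR : (n : ℝ) ≤ 0 := by exact_mod_cast hn0
    have h := peakon_key a ha (1 - n) (by omega)
    have hc1 : ((1 - n : ℤ) : ℝ) = 1 - (n : ℝ) := by push_cast; ring
    rw [hc1] at h
    have habs : |(n : ℝ) - 1 / 2| = 1 / 2 - (n : ℝ) := by
      rw [abs_of_nonpos (by linarith)]; ring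
    rw [habs, show -a * (1 / 2 - (n : ℝ)) = -a * ((1 - (n : ℝ)) - 1 / 2) by ring,
      show (1 / 2 - (n : ℝ)) + 1 / 2 + 1 / (Real.exp a - 1)
        = (1 - (n : ℝ)) + 1 / (Real.exp a - 1) by ring]
    refine ((Equiv.subLeft (1 : ℤ)).hasSum_iff.mpr h).congr_fun fun m => ?_
    simp only [Function.comp_apply, Equiv.subLeft_apply]
    have hc2 : ((1 - m : ℤ) : ℝ) = 1 - (m : ℝ) := by push_cast; ring
    rw [hc2, show (1 : ℝ) - (n : ℝ) - (1 - (m : ℝ)) = -((n : ℝ) - (m : ℝ)) by ring,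
      show (1 : ℝ) - (m : ℝ) - 1 / 2 = -((m : ℝ) - 1 / 2) by ring, abs_neg, abs_neg]

/-- For every `a > 0` and `A > 0`, with `B > 0` defined by
`ln (B/A) = a (e^a - 1)/(2 (e^a + 1))`, the inter-site (two-site) peakon
`u_n = B exp (-a|n - 1/2|)` is an exact static solution of the discrete
Klein–Gordon lattice equation: the right-hand side vanishes for every `n`. -/
theorem intersite_peakon_is_static_KG_solution (a A B : ℝ) (ha : 0 < a) (hA : 0 < A)
    (hB : 0 < B)
    (hBA : Real.log (B / A) = a * (Real.exp a - 1) / (2 * (Real.exp a + 1))) (n : ℤ) :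
    (∑' m : ℤ, Real.exp (-a * |(n : ℝ) - (m : ℝ)|) * (B * Real.exp (-a * |(m : ℝ) - 1 / 2|)))
      - ((Real.exp (2 * a) + 1) / (Real.exp (2 * a) - 1)
          - (1 / (2 * a)) * Real.log ((B * Real.exp (-a * |(n : ℝ) - 1 / 2|)) ^ 2 / A ^ 2))
        * (B * Real.exp (-a * |(n : ℝ) - 1 / 2|)) = 0 := by
  have hE1 : 1 < Real.exp a := by
    rw [← Real.exp_zero]; exact Real.exp_lt_exp.mpr ha
  set d : ℝ := |(n : ℝ) - 1 / 2| with hd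
  have hS := (peakon_key2 a ha n).mul_left B
  have hS' : HasSum (fun m : ℤ => Real.exp (-a * |(n : ℝ) - (m : ℝ)|)
        * (B * Real.exp (-a * |(m : ℝ) - 1 / 2|)))
      (B * (Real.exp (-a * d) * (d + 1 / 2 + 1 / (Real.exp a - 1)))) :=
    hS.congr_fun fun m => by ring
  rw [hS'.tsum_eq]
  have hlog : Real.log ((B * Real.exp (-a * d)) ^ 2 / A ^ 2)
      = 2 * (Real.log (B / A) - a * d) := by
    rw [show (B * Real.exp (-a * d)) ^ 2 / A ^ 2 = (B / A * Real.exp (-a * d)) ^ 2 by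
      field_simp]
    rw [Real.log_pow, Real.log_mul (by positivity) (Real.exp_ne_zero _), Real.log_exp]
    push_cast
    ring
  rw [hlog, hBA, show (2 : ℝ) * a = a + a by ring, Real.exp_add]
  have hE0 : (0 : ℝ) < Real.exp a := Real.exp_pos a
  have hEE : Real.exp a * Real.exp a - 1 ≠ 0 := by nlinarith
  have hEm : Real.exp a - 1 ≠ 0 := by linarith
  have hEp : Real.exp a + 1 ≠ 0 := by linarith
  have ha' : a ≠ 0 := ne_of_gt ha
  have hEE2 : Real.exp a ^ 2 - 1 ≠ 0 := by nlinarith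
  field_simp
  ring
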